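/- Let C ⊆ ℝ^12 = ℝ^8 × ℝ^4 be the conic hull of the 22 vectors v_1,…,v_22 listed in the context, and for i = 1,…,42 let C_i be the conic hull of {v_1,…,v_8} ∪ {v_{8+j} : j ∈ J_i}, with the index sets J_i as in the context. Then {C_1,…,C_42} is a sector decomposition of C: each C_i has linear span equal to ℝ^12 and is generated by 12 vectors (hence is a full sector of dimension and rank 12); C = C_1 ∪ ⋯ ∪ C_42; and for all distinct i, ℓ the intersection C_i ∩ C_ℓ has empty interior in ℝ^12. -/

import Mathlib

noncomputable section

/-- The conic hull of a set `S`: all finite nonnegative real linear combinations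
of elements of `S`. -/
def coneHull {V : Type*} [AddCommGroup V] [Module ℝ V] (S : Set V) : Set V :=
  { x | ∃ (n : ℕ) (c : Fin n → ℝ) (v : Fin n → V),
      (∀ i, 0 ≤ c i) ∧ (∀ i, v i ∈ S) ∧ x = ∑ i, c i • v i }

/-- A cone is the conic hull of a finite set. -/
def IsCone {V : Type*} [AddCommGroup V] [Module ℝ V] (C : Set V) : Prop :=
  ∃ S : Finset V, C = coneHull (S : Set V)

/-- The dimension of a cone: the dimension of its linear span. -/
def coneDim {V : Type*} [AddCommGroup V] [Module ℝ V] (C : Set V) : ℕ :=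
  Module.finrank ℝ (Submodule.span ℝ C)

/-- The rank of a cone: the minimum cardinality of a finite generating set. -/
def coneRank {V : Type*} [AddCommGroup V] [Module ℝ V] (C : Set V) : ℕ :=
  sInf { r : ℕ | ∃ S : Finset V, S.card = r ∧ C = coneHull (S : Set V) }

/-- A full cone: a cone whose dimension equals the ambient dimension. -/
def IsFullCone {V : Type*} [AddCommGroup V] [Module ℝ V] (C : Set V) : Prop :=
  IsCone C ∧ coneDim C = Module.finrank ℝ V

/-- A sector: a cone whose rank equals its dimension. -/
def IsSector {V : Type*} [AddCommGroup V] [Module ℝ V] (C : Set V) : Prop :=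
  IsCone C ∧ coneRank C = coneDim C

/-- A sector decomposition of a full cone `C`: a finite family of subcones, each a full
sector, whose union is `C`, with pairwise intersections of empty interior. -/
def IsSectorDecomposition {V : Type*} [AddCommGroup V] [Module ℝ V] [TopologicalSpace V]
    {p : ℕ} (C : Set V) (F : Fin p → Set V) : Prop :=
  (∀ i, F i ⊆ C) ∧ (∀ i, IsSector (F i) ∧ IsFullCone (F i)) ∧
  (C = ⋃ i, F i) ∧ ∀ i j, i ≠ j → interior (F i ∩ F j) = ∅

/-- The intersection of two cones is a wall (of dimension `d`, one less than the ambient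
dimension) if it is a cone of dimension `d`. -/
def IsWallDim {V : Type*} [AddCommGroup V] [Module ℝ V] (C C' : Set V) (d : ℕ) : Prop :=
  IsCone (C ∩ C') ∧ coneDim (C ∩ C') = d

/-- The 22 Hilbert basis vectors `v_1,…,v_22` of the (model of the) completed
Knutson-Tao-Goncharov-Shen cone of the triangulated ideal square, in `ℝ^12 = ℝ^8 × ℝ^4`. -/
def vS : Fin 22 → Fin 12 → ℝ :=
  ![![1, 0, 0, 0, 0, 0, 0, 0, 0, 0, 0, 0],
    ![0, 1, 0, 0, 0, 0, 0, 0, 0, 0, 0, 0],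
    ![0, 0, 1, 0, 0, 0, 0, 0, 0, 0, 0, 0],
    ![0, 0, 0, 1, 0, 0, 0, 0, 0, 0, 0, 0],
    ![0, 0, 0, 0, 1, 0, 0, 0, 0, 0, 0, 0],
    ![0, 0, 0, 0, 0, 1, 0, 0, 0, 0, 0, 0],
    ![0, 0, 0, 0, 0, 0, 1, 0, 0, 0, 0, 0],
    ![0, 0, 0, 0, 0, 0, 0, 1, 0, 0, 0, 0],
    ![0, 0, 0, 0, 0, 0, 0, 0, 1, -1, 0, 0],
    ![0, 0, 0, 0, 0, 0, 0, 0, 1, 0, 0, 0],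
    ![0, 1, 0, 1, 0, 1, 0, 0, -1, 0, 0, 0],
    ![0, 1, 0, 1, 0, 1, 0, 0, -1, 0, 0, 1],
    ![0, 0, 0, 1, 0, 0, 0, 0, 0, 0, 1, 0],
    ![0, 0, 0, 0, 0, 1, 0, 1, 0, 0, -1, 0],
    ![0, 0, 1, 0, 0, 0, 0, 1, 0, 1, -1, 0],
    ![0, 0, 0, 0, 1, 0, 0, 0, 0, 0, 1, -1],
    ![0, 0, 0, 0, 0, 0, 0, 1, 1, 0, -1, 0],
    ![0, 1, 0, 1, 0, 1, 0, 0, -1, 0, 1, 0],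
    ![0, 0, 0, 1, 0, 0, 0, 0, 0, 0, 0, 1],
    ![0, 0, 1, 0, 0, 0, 0, 0, 0, 1, 0, 0],
    ![0, 0, 0, 0, 1, 0, 0, 0, 0, 0, 0, -1],
    ![0, 0, 0, 0, 0, 1, 0, 0, 0, -1, 0, 0]]

/-- The 14 tropical 𝒳-coordinate vectors `u_1,…,u_14 ∈ ℝ^4`, indexed 1-based
(the entry at index `0` is a dummy and is never used). -/
def uS : Fin 15 → Fin 4 → ℝ :=
  ![![0, 0, 0, 0],
    ![1, -1, 0, 0],
    ![1, 0, 0, 0],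
    ![-1, 0, 0, 0],
    ![-1, 0, 0, 1],
    ![0, 0, 1, 0],
    ![0, 0, -1, 0],
    ![0, 1, -1, 0],
    ![0, 0, 1, -1],
    ![1, 0, -1, 0],
    ![-1, 0, 1, 0],
    ![0, 0, 0, 1],
    ![0, 1, 0, 0],
    ![0, 0, 0, -1],
    ![0, -1, 0, 0]]

/-- The 42 index sets `J_1,…,J_42 ⊆ {1,…,14}`, each of cardinality 4. -/
def JS : Fin 42 → Finset (Fin 15) :=
  ![{3, 8, 13, 12}, {2, 8, 13, 12}, {3, 12, 7, 13}, {2, 12, 7, 13},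
    {10, 3, 8, 12}, {5, 10, 4, 12}, {3, 14, 10, 8}, {10, 14, 5, 4},
    {1, 14, 6, 11}, {4, 14, 6, 11}, {1, 14, 5, 11}, {4, 14, 5, 11},
    {9, 1, 6, 11}, {2, 7, 9, 11}, {9, 1, 6, 13}, {2, 7, 9, 13},
    {1, 2, 13, 8}, {3, 7, 6, 13}, {3, 14, 6, 4}, {1, 14, 5, 8},
    {1, 14, 8, 13}, {1, 14, 6, 13}, {3, 14, 8, 13}, {3, 14, 6, 13},
    {2, 1, 5, 11}, {4, 7, 6, 11}, {3, 12, 7, 4}, {2, 12, 5, 8},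
    {5, 12, 11, 2}, {7, 12, 11, 2}, {4, 12, 5, 11}, {4, 12, 7, 11},
    {1, 2, 5, 8}, {3, 7, 6, 4}, {10, 3, 4, 12}, {10, 12, 5, 8},
    {3, 14, 10, 4}, {10, 14, 5, 8}, {2, 1, 9, 11}, {9, 7, 6, 11},
    {2, 1, 9, 13}, {7, 9, 6, 13}]

/-- The first 8 Hilbert basis vectors (the corner-arc vectors == first 8 standard basis
vectors of `ℝ^12`). -/
def eSet : Set (Fin 12 → ℝ) :=
  Set.range fun a : Fin 8 => vS (Fin.castLE (by norm_num) a)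

/-- The last 14 Hilbert basis vectors `v_9,…,v_22`, indexed 1-based over `Fin 15`
(so `wS j = v_{8+j}`; the entry at index `0` is a dummy and is never used). -/
def wS : Fin 15 → Fin 12 → ℝ :=
  ![0, vS 8, vS 9, vS 10, vS 11, vS 12, vS 13, vS 14,
    vS 15, vS 16, vS 17, vS 18, vS 19, vS 20, vS 21]

/-- The model of the completed KTGS cone of the triangulated square: the conic hull of
all 22 Hilbert basis vectors. -/
def squareCone : Set (Fin 12 → ℝ) := coneHull (Set.range vS)

/-- The sector `C_i ⊆ ℝ^12`: the conic hull of `{v_1,…,v_8} ∪ {v_{8+j} : j ∈ J_i}`. -/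
def CS (i : Fin 42) : Set (Fin 12 → ℝ) := coneHull (eSet ∪ wS '' ↑(JS i))

/-!
The sectors are the domains of linearity of a tropical height function. Write `π : ℝ¹² → ℝ⁴`
for the projection to the last four coordinates and `e₁, …, e₈` for the first eight standard
basis vectors. Each `C_i` is generated by `e₁, …, e₈` and the four vectors `w_j = v_{8+j}`
(`j ∈ J_i`), whose projections form a basis of `ℝ⁴`; and there are integer vectors `p_i ∈ ℤ⁴`
such that `C_i` is the part of `C` where `⟨p_i, π x⟩` is the largest of the 42 heights.

Covering: if `⟨p_i, π x⟩` is maximal at `x ∈ C`, the coordinate of `π x` along the `r`-th basis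
vector of `C_i` is a positive multiple of `⟨p_i - p_{i'}, π x⟩ ≥ 0`, where `i'` is the sector
across the `r`-th facet of `C_i`; the remaining coordinates, along `e₁, …, e₈`, are linear in
`x` and nonnegative on each of the 22 generators of `C`. Disjointness: the height `⟨p_i, π x⟩`
dominates on `C_i`, so `C_i ∩ C_l` lies in the hyperplane `⟨p_i - p_l, π x⟩ = 0`.
The finitely many integer identities and inequalities this needs are checked by computation.
-/

open Matrix

theorem Fin.natAdd_ne_castAdd {m n : ℕ} (s : Fin n) (a : Fin m) :
    Fin.natAdd m s ≠ Fin.castAdd n a := by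
  rw [Ne, Fin.ext_iff, Fin.val_natAdd, Fin.val_castAdd]
  omega

section ConeHull

variable {V : Type*} [AddCommGroup V] [Module ℝ V]

theorem coneHull_eq_hull (S : Set V) : coneHull S = (PointedCone.hull ℝ S : Set V) := by
  ext x
  simp only [coneHull, Set.mem_ofPred_eq, SetLike.mem_coe, Submodule.mem_span_set']
  constructor
  · rintro ⟨n, c, v, hc, hv, rfl⟩
    exact ⟨n, fun i => ⟨c i, hc i⟩, fun i => ⟨v i, hv i⟩, rfl⟩
  · rintro ⟨n, c, v, rfl⟩
    exact ⟨n, fun i => c i, fun i => v i, fun i => (c i).2, fun i => (v i).2, rfl⟩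

theorem coneHull_mono {S T : Set V} (h : S ⊆ T) : coneHull S ⊆ coneHull T := by
  rw [coneHull_eq_hull, coneHull_eq_hull]
  exact SetLike.coe_subset_coe.2 (Submodule.span_mono h)

theorem span_coneHull (S : Set V) : Submodule.span ℝ (coneHull S) = Submodule.span ℝ S := by
  rw [coneHull_eq_hull, Submodule.span_span_of_tower]

theorem sum_smul_mem_coneHull {ι : Type*} [Fintype ι] {S : Set V} {c : ι → ℝ} {v : ι → V}
    (hc : ∀ i, 0 ≤ c i) (hv : ∀ i, v i ∈ S) : ∑ i, c i • v i ∈ coneHull S := by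
  rw [coneHull_eq_hull]
  exact Submodule.sum_mem _ fun i _ =>
    Submodule.smul_mem _ (⟨c i, hc i⟩ : {c : ℝ // 0 ≤ c}) (Submodule.subset_span (hv i))

theorem nonneg_of_mem_coneHull {W : Type*} [AddCommGroup W] [PartialOrder W]
    [IsOrderedAddMonoid W] [Module ℝ W] [PosSMulMono ℝ W] {S : Set V} (φ : V →ₗ[ℝ] W)
    (hS : ∀ y ∈ S, 0 ≤ φ y) {x : V} (hx : x ∈ coneHull S) : 0 ≤ φ x := by
  rw [coneHull_eq_hull] at hx
  have : PointedCone.hull ℝ S ≤ (PointedCone.positive ℝ W).comap φ := Submodule.span_le.2 hS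
  exact this hx

theorem coneRank_coneHull_of_span_eq_top {S : Finset V}
    (hS : Submodule.span ℝ (S : Set V) = ⊤) (hcard : S.card ≤ Module.finrank ℝ V) :
    coneRank (coneHull (S : Set V)) = Module.finrank ℝ V := by
  have hmem : S.card ∈ {r | ∃ T : Finset V, T.card = r ∧ coneHull (S : Set V) = coneHull T} :=
    ⟨S, rfl, rfl⟩
  refine le_antisymm ((Nat.sInf_le hmem).trans hcard) (le_csInf ⟨_, hmem⟩ ?_)
  rintro r ⟨T, rfl, hT⟩
  have hT' : Submodule.span ℝ (T : Set V) = ⊤ := by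
    rw [← span_coneHull, ← hT, span_coneHull, hS]
  calc Module.finrank ℝ V = (T : Set V).finrank ℝ := by rw [Set.finrank, hT', finrank_top]
    _ ≤ T.card := finrank_span_finset_le_card T

end ConeHull

section Separation

variable {V : Type*} [AddCommGroup V] [Module ℝ V] [TopologicalSpace V]
  [IsTopologicalAddGroup V] [ContinuousSMul ℝ V]

theorem interior_eq_empty_of_subset_ker {φ : V →ₗ[ℝ] ℝ} (hφ : φ ≠ 0) {A : Set V}
    (hA : A ⊆ LinearMap.ker φ) : interior A = ∅ := by
  rw [← Set.not_nonempty_iff_eq_empty]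
  rintro ⟨x, hx⟩
  exact hφ <| LinearMap.ker_eq_top.1 <|
    Submodule.eq_top_of_nonempty_interior' _ ⟨x, interior_mono hA hx⟩

theorem interior_inter_eq_empty_of_le {φ ψ : V →ₗ[ℝ] ℝ} (hne : φ ≠ ψ) {A B : Set V}
    (hA : ∀ x ∈ A, ψ x ≤ φ x) (hB : ∀ x ∈ B, φ x ≤ ψ x) : interior (A ∩ B) = ∅ :=
  interior_eq_empty_of_subset_ker (sub_ne_zero.2 hne) fun x hx => by
    simpa [sub_eq_zero] using le_antisymm (hB x hx.2) (hA x hx.1)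

end Separation

/-! Coordinates on `R^(m+n)` for the basis formed by the first `m` standard vectors and the rows
of `W`, when the last `n` columns of `W` form a matrix with inverse `N`. -/

namespace Block

variable {R : Type*} [CommRing R] (m : ℕ) {n : ℕ}

def liftCoord (N : Matrix (Fin n) (Fin n) R) : (Fin (m + n) → R) →ₗ[R] Fin n → R :=
  N.vecMulLinear ∘ₗ LinearMap.funLeft R R (Fin.natAdd m)

def baseCoord (W : Matrix (Fin n) (Fin (m + n)) R) (N : Matrix (Fin n) (Fin n) R) :
    (Fin (m + n) → R) →ₗ[R] Fin m → R :=
  LinearMap.funLeft R R (Fin.castAdd n) ∘ₗ (LinearMap.id - W.vecMulLinear ∘ₗ liftCoord m N)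

def height (p : Fin n → R) : (Fin (m + n) → R) →ₗ[R] R :=
  dotProductEquiv R (Fin n) p ∘ₗ LinearMap.funLeft R R (Fin.natAdd m)

variable {m} {W : Matrix (Fin n) (Fin (m + n)) R} {N : Matrix (Fin n) (Fin n) R}

theorem liftCoord_apply (x : Fin (m + n) → R) : liftCoord m N x = (x ∘ Fin.natAdd m) ᵥ* N :=
  rfl

theorem baseCoord_apply (x : Fin (m + n) → R) (a : Fin m) :
    baseCoord m W N x a = x (Fin.castAdd n a) - (liftCoord m N x ᵥ* W) (Fin.castAdd n a) :=
  rfl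

theorem height_apply (p : Fin n → R) (x : Fin (m + n) → R) :
    height m p x = p ⬝ᵥ (x ∘ Fin.natAdd m) :=
  rfl

theorem eq_sum_baseCoord_add_liftCoord (hN : N * W.submatrix id (Fin.natAdd m) = 1)
    (x : Fin (m + n) → R) :
    x = ∑ a, baseCoord m W N x a • Pi.single (Fin.castAdd n a) 1 + liftCoord m N x ᵥ* W := by
  ext j
  induction j using Fin.addCases with
  | left a => simp [baseCoord_apply, Pi.single_apply]
  | right s =>
    have hlift : (liftCoord m N x ᵥ* W) (Fin.natAdd m s) = x (Fin.natAdd m s) := by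
      change (liftCoord m N x ᵥ* W.submatrix id (Fin.natAdd m)) s = _
      rw [liftCoord_apply, vecMul_vecMul, hN, vecMul_one, Function.comp_apply]
    simp [hlift, Fin.natAdd_ne_castAdd]

theorem span_range_single_union_range_eq_top (hN : N * W.submatrix id (Fin.natAdd m) = 1) :
    Submodule.span R
      (Set.range (fun a => Pi.single (Fin.castAdd n a) 1) ∪ Set.range fun r => W r) = ⊤ := by
  refine eq_top_iff.2 fun x _ => ?_
  rw [eq_sum_baseCoord_add_liftCoord hN x, vecMul_eq_sum]
  exact add_mem
    (Submodule.sum_mem _ fun a _ => Submodule.smul_mem _ _ (Submodule.subset_span (.inl ⟨a, rfl⟩)))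
    (Submodule.sum_mem _ fun r _ => Submodule.smul_mem _ _ (Submodule.subset_span (.inr ⟨r, rfl⟩)))

theorem mul_liftCoord_eq_sub_height {b : R} {r : Fin n} {p p' : Fin n → R}
    (h : ∀ s, b * N s r = p s - p' s) (x : Fin (m + n) → R) :
    b * liftCoord m N x r = height m p x - height m p' x := by
  simp only [liftCoord_apply, height_apply, vecMul, dotProduct, Finset.mul_sum,
    ← Finset.sum_sub_distrib]
  refine Finset.sum_congr rfl fun s _ => ?_
  rw [Function.comp_apply, ← sub_mul, ← h]
  ring

theorem height_injective : Function.Injective (height (R := R) m (n := n)) := by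
  intro p p' h
  ext s
  simpa [height_apply, dotProduct, Pi.single_apply, Fin.natAdd_inj] using
    LinearMap.congr_fun h (Pi.single (Fin.natAdd m s) 1)

theorem height_single_castAdd (p : Fin n → R) (a : Fin m) :
    height m p (Pi.single (Fin.castAdd n a) 1) = 0 := by
  simp [height_apply, dotProduct, Fin.natAdd_ne_castAdd]

theorem baseCoord_map {S : Type*} [CommRing S] (f : R →+* S) (x : Fin (m + n) → R) :
    baseCoord m (W.map f) (N.map f) (f ∘ x) = f ∘ baseCoord m W N x := by
  ext a
  simp only [baseCoord_apply, liftCoord_apply, Function.comp_apply, vecMul_vecMul, map_sub,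
    RingHom.map_vecMul, Matrix.map_mul, Function.comp_assoc]

theorem height_map {S : Type*} [CommRing S] (f : R →+* S) (p : Fin n → R)
    (x : Fin (m + n) → R) : height m (f ∘ p) (f ∘ x) = f (height m p x) := by
  rw [height_apply, height_apply, RingHom.map_dotProduct, Function.comp_assoc]

theorem mem_coneHull_of_coord_nonneg {W : Matrix (Fin n) (Fin (m + n)) ℝ}
    {N : Matrix (Fin n) (Fin n) ℝ} (hN : N * W.submatrix id (Fin.natAdd m) = 1)
    {x : Fin (m + n) → ℝ} (hb : 0 ≤ baseCoord m W N x) (hl : 0 ≤ liftCoord m N x) :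
    x ∈ coneHull (Set.range (fun a => Pi.single (Fin.castAdd n a) 1) ∪ Set.range fun r => W r) := by
  rw [eq_sum_baseCoord_add_liftCoord hN x, vecMul_eq_sum, coneHull_eq_hull, SetLike.mem_coe]
  refine add_mem ?_ ?_ <;> rw [← SetLike.mem_coe, ← coneHull_eq_hull]
  · exact sum_smul_mem_coneHull (fun a => hb a) fun a => .inl ⟨a, rfl⟩
  · exact sum_smul_mem_coneHull (fun r => hl r) fun r => .inr ⟨r, rfl⟩

end Block

open Block

/- Certificate data: `jList i` enumerates `J_i`; `tropInv i` inverts the matrix with rows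
`π w_j = u_j`, `j = jList i r`; `heightInt i` is `p_i`; and `facetNbr i r` is the sector `i'`
across the `r`-th facet of `C_i`, with `facetScale i r` the positive factor. -/

def vInt : Matrix (Fin 22) (Fin 12) ℤ :=
  ![![1, 0, 0, 0, 0, 0, 0, 0, 0, 0, 0, 0],
   ![0, 1, 0, 0, 0, 0, 0, 0, 0, 0, 0, 0],
   ![0, 0, 1, 0, 0, 0, 0, 0, 0, 0, 0, 0],
   ![0, 0, 0, 1, 0, 0, 0, 0, 0, 0, 0, 0],
   ![0, 0, 0, 0, 1, 0, 0, 0, 0, 0, 0, 0],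
   ![0, 0, 0, 0, 0, 1, 0, 0, 0, 0, 0, 0],
   ![0, 0, 0, 0, 0, 0, 1, 0, 0, 0, 0, 0],
   ![0, 0, 0, 0, 0, 0, 0, 1, 0, 0, 0, 0],
   ![0, 0, 0, 0, 0, 0, 0, 0, 1, -1, 0, 0],
   ![0, 0, 0, 0, 0, 0, 0, 0, 1, 0, 0, 0],
   ![0, 1, 0, 1, 0, 1, 0, 0, -1, 0, 0, 0],
   ![0, 1, 0, 1, 0, 1, 0, 0, -1, 0, 0, 1],
   ![0, 0, 0, 1, 0, 0, 0, 0, 0, 0, 1, 0],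
   ![0, 0, 0, 0, 0, 1, 0, 1, 0, 0, -1, 0],
   ![0, 0, 1, 0, 0, 0, 0, 1, 0, 1, -1, 0],
   ![0, 0, 0, 0, 1, 0, 0, 0, 0, 0, 1, -1],
   ![0, 0, 0, 0, 0, 0, 0, 1, 1, 0, -1, 0],
   ![0, 1, 0, 1, 0, 1, 0, 0, -1, 0, 1, 0],
   ![0, 0, 0, 1, 0, 0, 0, 0, 0, 0, 0, 1],
   ![0, 0, 1, 0, 0, 0, 0, 0, 0, 1, 0, 0],
   ![0, 0, 0, 0, 1, 0, 0, 0, 0, 0, 0, -1],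
   ![0, 0, 0, 0, 0, 1, 0, 0, 0, -1, 0, 0]]

def jList : Fin 42 → Fin 4 → Fin 15 :=
  ![![3, 8, 13, 12],
   ![2, 8, 13, 12],
   ![3, 12, 7, 13],
   ![2, 12, 7, 13],
   ![10, 3, 8, 12],
   ![5, 10, 4, 12],
   ![3, 14, 10, 8],
   ![10, 14, 5, 4],
   ![1, 14, 6, 11],
   ![4, 14, 6, 11],
   ![1, 14, 5, 11],
   ![4, 14, 5, 11],
   ![9, 1, 6, 11],
   ![2, 7, 9, 11],
   ![9, 1, 6, 13],
   ![2, 7, 9, 13],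
   ![1, 2, 13, 8],
   ![3, 7, 6, 13],
   ![3, 14, 6, 4],
   ![1, 14, 5, 8],
   ![1, 14, 8, 13],
   ![1, 14, 6, 13],
   ![3, 14, 8, 13],
   ![3, 14, 6, 13],
   ![2, 1, 5, 11],
   ![4, 7, 6, 11],
   ![3, 12, 7, 4],
   ![2, 12, 5, 8],
   ![5, 12, 11, 2],
   ![7, 12, 11, 2],
   ![4, 12, 5, 11],
   ![4, 12, 7, 11],
   ![1, 2, 5, 8],
   ![3, 7, 6, 4],
   ![10, 3, 4, 12],
   ![10, 12, 5, 8],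
   ![3, 14, 10, 4],
   ![10, 14, 5, 8],
   ![2, 1, 9, 11],
   ![9, 7, 6, 11],
   ![2, 1, 9, 13],
   ![7, 9, 6, 13]]

def tropInv : Fin 42 → Matrix (Fin 4) (Fin 4) ℤ :=
  ![![![-1, 0, 0, 0],
     ![0, 0, 0, 1],
     ![0, 1, -1, 0],
     ![0, 0, -1, 0]],
    ![![1, 0, 0, 0],
     ![0, 0, 0, 1],
     ![0, 1, -1, 0],
     ![0, 0, -1, 0]],
    ![![-1, 0, 0, 0],
     ![0, 1, 0, 0],
     ![0, 1, -1, 0],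
     ![0, 0, 0, -1]],
    ![![1, 0, 0, 0],
     ![0, 1, 0, 0],
     ![0, 1, -1, 0],
     ![0, 0, 0, -1]],
    ![![0, -1, 0, 0],
     ![0, 0, 0, 1],
     ![1, -1, 0, 0],
     ![1, -1, -1, 0]],
    ![![1, -1, 0, 0],
     ![0, 0, 0, 1],
     ![1, 0, 0, 0],
     ![1, -1, 1, 0]],
    ![![-1, 0, 0, 0],
     ![0, -1, 0, 0],
     ![-1, 0, 1, 0],
     ![-1, 0, 1, -1]],
    ![![-1, 0, 1, 0],
     ![0, -1, 0, 0],
     ![0, 0, 1, 0],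
     ![-1, 0, 1, 1]],
    ![![1, -1, 0, 0],
     ![0, -1, 0, 0],
     ![0, 0, -1, 0],
     ![0, 0, 0, 1]],
    ![![-1, 0, 0, 1],
     ![0, -1, 0, 0],
     ![0, 0, -1, 0],
     ![0, 0, 0, 1]],
    ![![1, -1, 0, 0],
     ![0, -1, 0, 0],
     ![0, 0, 1, 0],
     ![0, 0, 0, 1]],
    ![![-1, 0, 0, 1],
     ![0, -1, 0, 0],
     ![0, 0, 1, 0],
     ![0, 0, 0, 1]],
    ![![1, 0, -1, 0],
     ![1, -1, -1, 0],
     ![0, 0, -1, 0],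
     ![0, 0, 0, 1]],
    ![![1, 0, 0, 0],
     ![1, 1, -1, 0],
     ![1, 0, -1, 0],
     ![0, 0, 0, 1]],
    ![![1, 0, -1, 0],
     ![1, -1, -1, 0],
     ![0, 0, -1, 0],
     ![0, 0, 0, -1]],
    ![![1, 0, 0, 0],
     ![1, 1, -1, 0],
     ![1, 0, -1, 0],
     ![0, 0, 0, -1]],
    ![![0, 1, 0, 0],
     ![-1, 1, 0, 0],
     ![0, 0, -1, 1],
     ![0, 0, -1, 0]],
    ![![-1, 0, 0, 0],
     ![0, 1, -1, 0],
     ![0, 0, -1, 0],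
     ![0, 0, 0, -1]],
    ![![-1, 0, 0, 0],
     ![0, -1, 0, 0],
     ![0, 0, -1, 0],
     ![-1, 0, 0, 1]],
    ![![1, -1, 0, 0],
     ![0, -1, 0, 0],
     ![0, 0, 1, 0],
     ![0, 0, 1, -1]],
    ![![1, -1, 0, 0],
     ![0, -1, 0, 0],
     ![0, 0, 1, -1],
     ![0, 0, 0, -1]],
    ![![1, -1, 0, 0],
     ![0, -1, 0, 0],
     ![0, 0, -1, 0],
     ![0, 0, 0, -1]],
    ![![-1, 0, 0, 0],
     ![0, -1, 0, 0],
     ![0, 0, 1, -1],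
     ![0, 0, 0, -1]],
    ![![-1, 0, 0, 0],
     ![0, -1, 0, 0],
     ![0, 0, -1, 0],
     ![0, 0, 0, -1]],
    ![![1, 0, 0, 0],
     ![1, -1, 0, 0],
     ![0, 0, 1, 0],
     ![0, 0, 0, 1]],
    ![![-1, 0, 0, 1],
     ![0, 1, -1, 0],
     ![0, 0, -1, 0],
     ![0, 0, 0, 1]],
    ![![-1, 0, 0, 0],
     ![0, 1, 0, 0],
     ![0, 1, -1, 0],
     ![-1, 0, 0, 1]],
    ![![1, 0, 0, 0],
     ![0, 1, 0, 0],
     ![0, 0, 1, 0],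
     ![0, 0, 1, -1]],
    ![![0, 0, 0, 1],
     ![0, 1, 0, 0],
     ![1, 0, 0, 0],
     ![0, 0, 1, 0]],
    ![![0, 0, 0, 1],
     ![0, 1, 0, 0],
     ![-1, 1, 0, 0],
     ![0, 0, 1, 0]],
    ![![-1, 0, 0, 1],
     ![0, 1, 0, 0],
     ![0, 0, 1, 0],
     ![0, 0, 0, 1]],
    ![![-1, 0, 0, 1],
     ![0, 1, 0, 0],
     ![0, 1, -1, 0],
     ![0, 0, 0, 1]],
    ![![0, 1, 0, 0],
     ![-1, 1, 0, 0],
     ![0, 0, 1, 0],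
     ![0, 0, 1, -1]],
    ![![-1, 0, 0, 0],
     ![0, 1, -1, 0],
     ![0, 0, -1, 0],
     ![-1, 0, 0, 1]],
    ![![0, -1, 0, 0],
     ![0, 0, 0, 1],
     ![1, -1, 0, 0],
     ![0, -1, 1, 0]],
    ![![-1, 0, 1, 0],
     ![0, 1, 0, 0],
     ![0, 0, 1, 0],
     ![0, 0, 1, -1]],
    ![![-1, 0, 0, 0],
     ![0, -1, 0, 0],
     ![-1, 0, 1, 0],
     ![-1, 0, 0, 1]],
    ![![-1, 0, 1, 0],
     ![0, -1, 0, 0],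
     ![0, 0, 1, 0],
     ![0, 0, 1, -1]],
    ![![1, 0, 0, 0],
     ![1, -1, 0, 0],
     ![1, 0, -1, 0],
     ![0, 0, 0, 1]],
    ![![1, 0, -1, 0],
     ![0, 1, -1, 0],
     ![0, 0, -1, 0],
     ![0, 0, 0, 1]],
    ![![1, 0, 0, 0],
     ![1, -1, 0, 0],
     ![1, 0, -1, 0],
     ![0, 0, 0, -1]],
    ![![0, 1, -1, 0],
     ![1, 0, -1, 0],
     ![0, 0, -1, 0],
     ![0, 0, 0, -1]]]

def heightInt : Fin 42 → Fin 4 → ℤ :=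
  ![![-2, 4, 1, 0],
   ![3, 4, 1, 0],
   ![-2, 4, 0, 0],
   ![3, 4, 0, 0],
   ![-2, 4, 2, 1],
   ![-1, 4, 3, 3],
   ![-2, 0, 2, 1],
   ![-1, 0, 3, 3],
   ![1, 0, -2, 4],
   ![0, 0, -2, 4],
   ![1, 0, 3, 4],
   ![0, 0, 3, 4],
   ![2, 1, -2, 4],
   ![3, 3, -1, 4],
   ![2, 1, -2, 0],
   ![3, 3, -1, 0],
   ![3, 2, 1, 0],
   ![-2, 2, -2, 0],
   ![-2, 0, -2, 2],
   ![1, 0, 3, 2],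
   ![1, 0, 1, 0],
   ![1, 0, -2, 0],
   ![-2, 0, 1, 0],
   ![-2, 0, -2, 0],
   ![3, 2, 3, 4],
   ![0, 2, -2, 4],
   ![-2, 4, 0, 2],
   ![3, 4, 3, 2],
   ![3, 4, 3, 4],
   ![3, 4, 0, 4],
   ![0, 4, 3, 4],
   ![0, 4, 0, 4],
   ![3, 2, 3, 2],
   ![-2, 2, -2, 2],
   ![-2, 4, 2, 2],
   ![-1, 4, 3, 2],
   ![-2, 0, 2, 2],
   ![-1, 0, 3, 2],
   ![3, 2, -1, 4],
   ![2, 2, -2, 4],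
   ![3, 2, -1, 0],
   ![2, 2, -2, 0]]

def facetNbr : Fin 42 → Fin 4 → Fin 42 :=
  ![![1, 2, 4, 22],
   ![0, 3, 27, 16],
   ![3, 17, 0, 26],
   ![2, 15, 1, 29],
   ![0, 35, 34, 6],
   ![34, 30, 35, 7],
   ![37, 4, 22, 36],
   ![11, 5, 36, 37],
   ![9, 12, 10, 21],
   ![8, 25, 11, 18],
   ![11, 24, 8, 19],
   ![10, 30, 9, 7],
   ![8, 39, 38, 14],
   ![39, 38, 29, 15],
   ![21, 41, 40, 12],
   ![41, 40, 3, 13],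
   ![1, 20, 32, 40],
   ![41, 23, 2, 33],
   ![9, 33, 36, 23],
   ![37, 32, 20, 10],
   ![22, 16, 21, 19],
   ![23, 14, 20, 8],
   ![20, 0, 23, 6],
   ![21, 17, 22, 18],
   ![10, 28, 38, 32],
   ![39, 9, 31, 33],
   ![31, 33, 34, 2],
   ![35, 32, 1, 28],
   ![29, 24, 27, 30],
   ![28, 13, 3, 31],
   ![28, 11, 31, 5],
   ![29, 25, 30, 26],
   ![27, 19, 16, 24],
   ![25, 18, 26, 17],
   ![26, 5, 4, 36],
   ![27, 37, 4, 5],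
   ![7, 34, 18, 6],
   ![19, 35, 6, 7],
   ![12, 13, 24, 40],
   ![25, 12, 13, 41],
   ![14, 15, 16, 38],
   ![14, 17, 15, 39]]

def facetScale : Fin 42 → Fin 4 → ℤ :=
  ![![5, 1, 1, 4],
   ![5, 1, 2, 2],
   ![5, 2, 1, 2],
   ![5, 1, 1, 4],
   ![1, 1, 1, 4],
   ![1, 1, 1, 4],
   ![1, 4, 1, 1],
   ![1, 4, 1, 1],
   ![1, 1, 5, 4],
   ![1, 2, 5, 2],
   ![1, 2, 5, 2],
   ![1, 4, 5, 1],
   ![1, 1, 1, 4],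
   ![1, 1, 1, 4],
   ![1, 1, 1, 4],
   ![1, 1, 1, 4],
   ![2, 2, 2, 2],
   ![4, 2, 2, 2],
   ![2, 2, 4, 2],
   ![2, 2, 2, 2],
   ![3, 2, 3, 2],
   ![3, 1, 3, 4],
   ![3, 4, 3, 1],
   ![3, 2, 3, 2],
   ![2, 2, 4, 2],
   ![2, 2, 2, 2],
   ![2, 2, 2, 2],
   ![4, 2, 2, 2],
   ![3, 2, 2, 3],
   ![3, 1, 4, 3],
   ![3, 4, 3, 1],
   ![3, 2, 3, 2],
   ![2, 2, 2, 2],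
   ![2, 2, 2, 2],
   ![2, 1, 1, 4],
   ![4, 4, 1, 1],
   ![1, 4, 4, 1],
   ![2, 4, 1, 1],
   ![1, 1, 4, 4],
   ![2, 1, 1, 4],
   ![1, 1, 2, 4],
   ![1, 4, 1, 4]]

def liftInt (i : Fin 42) : Matrix (Fin 4) (Fin 12) ℤ := fun r => vInt ((jList i r).addNat 7)

theorem JS_eq_image : ∀ i, JS i = Finset.univ.image (jList i) := by decide +kernel

theorem jList_ne_zero : ∀ i r, jList i r ≠ 0 := by decide +kernel

theorem vInt_castLE : ∀ a : Fin 8,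
    vInt (Fin.castLE (by norm_num) a) = Pi.single (Fin.castAdd 4 a) 1 := by
  decide +kernel

theorem tropInv_mul : ∀ i,
    tropInv i * (liftInt i).submatrix id (Fin.natAdd 8 : Fin 4 → Fin 12) = 1 := by
  decide +kernel

theorem facetScale_pos : ∀ i r, 0 < facetScale i r := by decide +kernel

theorem facetScale_mul_tropInv : ∀ i r s,
    facetScale i r * tropInv i s r = heightInt i s - heightInt (facetNbr i r) s := by
  decide +kernel

theorem baseCoord_vInt_nonneg : ∀ i k a, 0 ≤ baseCoord 8 (liftInt i) (tropInv i) (vInt k) a := by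
  decide +kernel

theorem height_liftInt_le : ∀ i l r,
    height 8 (heightInt l) (liftInt i r) ≤ height 8 (heightInt i) (liftInt i r) := by
  decide +kernel

theorem heightInt_injective : Function.Injective heightInt := by decide +kernel

theorem vS_eq_map : vS = vInt.map (↑) := by
  ext k n
  rw [Matrix.map_apply]
  revert k n
  simp [Fin.forall_fin_succ, vS, vInt]

theorem wS_eq_vS : ∀ j : Fin 15, j ≠ 0 → wS j = vS (j.addNat 7) := by
  simp [Fin.forall_fin_succ, wS]

section Sectors

variable {i l : Fin 42}

theorem vS_castLE (a : Fin 8) :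
    vS (Fin.castLE (by norm_num) a) = Pi.single (Fin.castAdd 4 a) 1 := by
  rw [vS_eq_map]
  ext n
  simp [Matrix.map_apply, vInt_castLE, Pi.single_apply]

theorem liftInt_map_apply (i : Fin 42) (r : Fin 4) :
    (liftInt i).map (↑) r = wS (jList i r) := by
  rw [wS_eq_vS _ (jList_ne_zero i r), vS_eq_map]
  rfl

theorem CS_eq_coneHull (i : Fin 42) :
    CS i = coneHull (Set.range (fun a => Pi.single (Fin.castAdd 4 a) 1) ∪
      Set.range fun r => (liftInt i).map ((↑) : ℤ → ℝ) r) := by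
  have he : eSet = Set.range (fun a => Pi.single (Fin.castAdd 4 a) 1) := by
    simp only [eSet, vS_castLE]
  have hw : wS '' ↑(JS i) = Set.range fun r => (liftInt i).map ((↑) : ℤ → ℝ) r := by
    rw [JS_eq_image, Finset.coe_image, Finset.coe_univ, Set.image_univ, ← Set.range_comp]
    simp only [Function.comp_def, liftInt_map_apply]
  rw [CS, he, hw]

theorem CS_subset_squareCone (i : Fin 42) : CS i ⊆ squareCone := by
  refine coneHull_mono ?_
  rintro _ (⟨a, rfl⟩ | ⟨j, hj, rfl⟩)
  · exact ⟨_, rfl⟩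
  · rw [JS_eq_image, Finset.coe_image] at hj
    obtain ⟨r, -, rfl⟩ := hj
    exact ⟨_, (wS_eq_vS _ (jList_ne_zero i r)).symm⟩

theorem tropInv_mul_map (i : Fin 42) :
    (tropInv i).map ((↑) : ℤ → ℝ) *
      ((liftInt i).map ((↑) : ℤ → ℝ)).submatrix id (Fin.natAdd 8 : Fin 4 → Fin 12) = 1 := by
  have h := congrArg (Matrix.map · (Int.castRingHom ℝ)) (tropInv_mul i)
  rw [Matrix.map_mul] at h
  simpa [Matrix.submatrix_map] using h

theorem span_CS (i : Fin 42) : Submodule.span ℝ (CS i) = ⊤ := by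
  rw [CS_eq_coneHull, span_coneHull]
  exact span_range_single_union_range_eq_top (tropInv_mul_map i)

theorem exists_finset_CS (i : Fin 42) :
    ∃ S : Finset (Fin 12 → ℝ), S.card ≤ 12 ∧ CS i = coneHull S := by
  classical
  refine ⟨Finset.univ.image (fun a => Pi.single (Fin.castAdd 4 a) 1) ∪
    Finset.univ.image fun r => (liftInt i).map (↑) r, ?_, ?_⟩
  · calc _ ≤ _ := Finset.card_union_le _ _
      _ ≤ 8 + 4 := add_le_add (Finset.card_image_le.trans (by simp))
        (Finset.card_image_le.trans (by simp))
  · rw [CS_eq_coneHull]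
    congr 1
    ext y
    simp

theorem coneDim_CS (i : Fin 42) : coneDim (CS i) = 12 := by
  rw [coneDim, span_CS, finrank_top, Module.finrank_fin_fun]

theorem coneRank_CS (i : Fin 42) : coneRank (CS i) = 12 := by
  obtain ⟨S, hcard, hS⟩ := exists_finset_CS i
  have hspan : Submodule.span ℝ (S : Set (Fin 12 → ℝ)) = ⊤ := by
    rw [← span_coneHull, ← hS, span_CS]
  rw [hS, coneRank_coneHull_of_span_eq_top hspan (by simpa using hcard), Module.finrank_fin_fun]

def sectorHeight (i : Fin 42) : (Fin 12 → ℝ) →ₗ[ℝ] ℝ := height 8 ((↑) ∘ heightInt i)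

theorem sectorHeight_injective : Function.Injective sectorHeight := by
  intro i l h
  refine heightInt_injective (funext fun s => ?_)
  simpa using congrFun (height_injective h) s

theorem facetScale_mul_liftCoord (i : Fin 42) (r : Fin 4) (x : Fin 12 → ℝ) :
    facetScale i r * liftCoord 8 ((tropInv i).map (↑)) x r =
      sectorHeight i x - sectorHeight (facetNbr i r) x := by
  refine mul_liftCoord_eq_sub_height (m := 8) (n := 4) (fun s => ?_) x
  simpa using congrArg (Int.cast : ℤ → ℝ) (facetScale_mul_tropInv i r s)

theorem baseCoord_vS_nonneg (i : Fin 42) (k : Fin 22) :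
    0 ≤ baseCoord 8 ((liftInt i).map (↑)) ((tropInv i).map (↑)) (vS k) := by
  intro a
  have h := congrFun (baseCoord_map (Int.castRingHom ℝ) (vInt k) (W := liftInt i)
    (N := tropInv i)) a
  rw [vS_eq_map]
  exact (Int.cast_nonneg (baseCoord_vInt_nonneg i k a)).trans_eq h.symm

theorem mem_CS_of_forall_le {x : Fin 12 → ℝ} (hx : x ∈ squareCone)
    (hmax : ∀ l, sectorHeight l x ≤ sectorHeight i x) : x ∈ CS i := by
  rw [CS_eq_coneHull]
  refine mem_coneHull_of_coord_nonneg (tropInv_mul_map i) ?_ fun r => ?_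
  · exact nonneg_of_mem_coneHull _ (by rintro _ ⟨k, rfl⟩; exact baseCoord_vS_nonneg i k) hx
  · have hb : (0 : ℝ) < facetScale i r := by exact_mod_cast facetScale_pos i r
    refine (mul_nonneg_iff_of_pos_left hb).1 ?_
    rw [facetScale_mul_liftCoord]
    exact sub_nonneg.2 (hmax _)

theorem squareCone_subset_iUnion_CS : squareCone ⊆ ⋃ i, CS i := fun x hx =>
  let ⟨i, hi⟩ := Finite.exists_max fun i => sectorHeight i x
  Set.mem_iUnion.2 ⟨i, mem_CS_of_forall_le hx hi⟩

theorem sectorHeight_le_of_mem_CS {x : Fin 12 → ℝ} (hx : x ∈ CS i) (l : Fin 42) :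
    sectorHeight l x ≤ sectorHeight i x := by
  rw [CS_eq_coneHull] at hx
  refine sub_nonneg.1 (nonneg_of_mem_coneHull (sectorHeight i - sectorHeight l) ?_ hx)
  rintro _ (⟨a, rfl⟩ | ⟨r, rfl⟩)
  · simp only [LinearMap.sub_apply, sectorHeight]
    rw [height_single_castAdd, height_single_castAdd, sub_self]
  · have hi := height_map (m := 8) (Int.castRingHom ℝ) (heightInt i) (liftInt i r)
    have hl := height_map (m := 8) (Int.castRingHom ℝ) (heightInt l) (liftInt i r)
    rw [LinearMap.sub_apply, sub_nonneg]
    exact hl.trans_le (((Int.cast_le (R := ℝ)).2 (height_liftInt_le i l r)).trans_eq hi.symm)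

theorem interior_CS_inter (h : i ≠ l) : interior (CS i ∩ CS l) = ∅ :=
  interior_inter_eq_empty_of_le (sectorHeight_injective.ne h)
    (fun _ hx => sectorHeight_le_of_mem_CS hx l) fun _ hx => sectorHeight_le_of_mem_CS hx i

end Sectors

/-- `{C_1,…,C_42}` is a sector decomposition of the cone
`C = coneHull{v_1,…,v_22} ⊆ ℝ^12`: each `C_i` has linear span `ℝ^12` and is generated by
12 vectors (hence is a full sector of dimension and rank 12), `C = C_1 ∪ ⋯ ∪ C_42`, and
pairwise intersections have empty interior. -/
theorem stmt_14 :
    IsSectorDecomposition squareCone CS ∧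
    (∀ i, Submodule.span ℝ (CS i) = ⊤ ∧ coneDim (CS i) = 12 ∧ coneRank (CS i) = 12) := by
  have hcone (i : Fin 42) : IsCone (CS i) :=
    let ⟨S, _, hS⟩ := exists_finset_CS i
    ⟨S, hS⟩
  have hfull (i : Fin 42) : coneDim (CS i) = Module.finrank ℝ (Fin 12 → ℝ) := by
    rw [coneDim_CS, Module.finrank_fin_fun]
  refine ⟨⟨CS_subset_squareCone, fun i => ⟨⟨hcone i, by rw [coneRank_CS, coneDim_CS]⟩,
    hcone i, hfull i⟩, ?_, fun i l => interior_CS_inter⟩,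
    fun i => ⟨span_CS i, coneDim_CS i, coneRank_CS i⟩⟩
  exact squareCone_subset_iUnion_CS.antisymm (Set.iUnion_subset CS_subset_squareCone)
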